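/- Let D be a generator matrix on a finite set X such that every entry of exp(D) is strictly positive, let π be the invariant probability vector of D, and let B, C ∈ ℝ^X with Σ_j π(j) C_j = 0. Then for every ω ∈ ℝ with ω ≠ 0, the matrix iωI − D is invertible, the function t ↦ e^{−iωt} Σ_{i,j} B_i (exp(tD))(i,j) C_j is integrable on [0,∞), and Bᵀ (iωI − D)^{−1} C = ∫₀^∞ e^{−iωt} Σ_{i,j} B_i (exp(tD))(i,j) C_j dt. -/

import Mathlib

/-!
Strict diagonal dominance (Gershgorin) makes `iω - D` invertible. For `t ≥ 0` the matrix
`exp (t • D)` is row-stochastic and fixes `π`, and the entries of `exp D` are bounded below by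
some `δ > 0`, so `exp D` shrinks the oscillation `max w - min w` of a vector by the factor
`1 - |X| δ` (Dobrushin). A `π`-centred vector is bounded by its oscillation, hence
`exp (t • D) *ᵥ C` decays exponentially. The integrand is `Bᵀ exp (-t (iω - D)) C`, which has
the antiderivative `-Bᵀ (iω - D)⁻¹ exp (-t (iω - D)) C` vanishing at infinity; evaluating it at
`t = 0` gives `Bᵀ (iω - D)⁻¹ C`.
-/

open NormedSpace MeasureTheory Filter Topology Finset Set
open scoped Matrix

theorem NormedSpace.exp_mul_eq_self_of_mul_eq_zero {𝔸 : Type*} [NormedRing 𝔸]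
    [NormedAlgebra ℚ 𝔸] [CompleteSpace 𝔸] {x y : 𝔸} (h : x * y = 0) : exp x * y = y := by
  rw [exp_eq_tsum ℚ, ← (expSeries_summable' (𝕂 := ℚ) x).tsum_mul_right, tsum_eq_single 0]
  · simp
  · intro n hn
    obtain ⟨n, rfl⟩ := Nat.exists_eq_succ_of_ne_zero hn
    rw [smul_mul_assoc, pow_succ, mul_assoc, h, mul_zero, smul_zero]

theorem Real.one_sub_pow_floor_le {κ : ℝ} (hκ : 0 ≤ κ) (hκ1 : κ ≤ 1) (t : ℝ) :
    (1 - κ) ^ ⌊t⌋₊ ≤ Real.exp κ * Real.exp (-κ * t) := by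
  have ht := Nat.lt_floor_add_one t
  calc (1 - κ) ^ ⌊t⌋₊ ≤ Real.exp (-κ) ^ ⌊t⌋₊ :=
        pow_le_pow_left₀ (by linarith) (by linarith [Real.add_one_le_exp (-κ)]) _
    _ = Real.exp (κ + -κ * (⌊t⌋₊ + 1)) := by rw [← Real.exp_nat_mul]; ring_nf
    _ ≤ Real.exp (κ + -κ * t) := Real.exp_le_exp.2 (by nlinarith)
    _ = Real.exp κ * Real.exp (-κ * t) := Real.exp_add _ _

theorem Complex.neg_lt_norm_sub_ofReal {z : ℂ} (hz : 0 ≤ z.re) (hz0 : z ≠ 0) {d : ℝ}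
    (hd : d ≤ 0) : -d < ‖z - d‖ := by
  have hpos := Complex.normSq_pos.2 hz0
  refine lt_of_pow_lt_pow_left₀ 2 (norm_nonneg _) ?_
  rw [← Complex.normSq_eq_norm_sq]
  simp only [Complex.normSq_apply, Complex.sub_re, Complex.ofReal_re, Complex.sub_im,
    Complex.ofReal_im, sub_zero] at hpos ⊢
  nlinarith

namespace Matrix

variable {X : Type*} [Fintype X]

theorem sum_sum_mul_mul_eq_dotProduct_mulVec {R : Type*} [CommSemiring R] (b : X → R)
    (M : Matrix X X R) (c : X → R) : ∑ i, ∑ j, b i * M i j * c j = b ⬝ᵥ (M *ᵥ c) := by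
  simp [dotProduct, mulVec, mul_sum, mul_assoc]

theorem norm_dotProduct_le_of_norm_le {𝕜 : Type*} [RCLike 𝕜] (p : X → 𝕜) {v : X → 𝕜} {r : ℝ}
    (h : ∀ i, ‖v i‖ ≤ r) : ‖p ⬝ᵥ v‖ ≤ (∑ i, ‖p i‖) * r := by
  rw [sum_mul]
  refine (norm_sum_le _ _).trans (sum_le_sum fun i _ => ?_)
  rw [norm_mul]
  exact mul_le_mul_of_nonneg_left (h i) (norm_nonneg _)

theorem mulVec_sub_mulVec_le {Q : Matrix X X ℝ} (hrow : ∀ i, ∑ j, Q i j = 1) {δ : ℝ}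
    (hδ : ∀ i j, δ ≤ Q i j) {w : X → ℝ} {M : ℝ} (hw : ∀ j l, w j - w l ≤ M) (i k : X) :
    (Q *ᵥ w) i - (Q *ᵥ w) k ≤ (1 - Fintype.card X * δ) * M := by
  have : Nonempty X := ⟨i⟩
  obtain ⟨l, hl⟩ := Finite.exists_min w
  have hterm : ∀ j, (Q i j - Q k j) * (w j - w l) ≤ (Q i j - δ) * M := fun j =>
    calc (Q i j - Q k j) * (w j - w l) ≤ (Q i j - δ) * (w j - w l) := by
          gcongr
          · linarith [hl j]
          · exact hδ k j
      _ ≤ (Q i j - δ) * M := by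
          gcongr
          · linarith [hδ i j]
          · exact hw j l
  calc (Q *ᵥ w) i - (Q *ᵥ w) k = ∑ j, (Q i j - Q k j) * (w j - w l) := by
        simp only [mulVec, dotProduct, sub_mul, mul_sub, sum_sub_distrib, ← sum_mul, hrow]
        ring
    _ ≤ ∑ j, (Q i j - δ) * M := sum_le_sum fun j _ => hterm j
    _ = (1 - Fintype.card X * δ) * M := by
        rw [← sum_mul, sum_sub_distrib, hrow, sum_const, card_univ, nsmul_eq_mul]

theorem abs_le_of_dotProduct_eq_zero {π w : X → ℝ} (hπnn : ∀ i, 0 ≤ π i)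
    (hπsum : ∑ i, π i = 1) (hw : π ⬝ᵥ w = 0) {M : ℝ} (hM : ∀ j l, w j - w l ≤ M) (i : X) :
    |w i| ≤ M := by
  have hwi : w i = ∑ k, π k * (w i - w k) := by
    simp only [mul_sub, sum_sub_distrib, ← sum_mul, hπsum, one_mul]
    rw [show ∑ k, π k * w k = π ⬝ᵥ w from rfl, hw, sub_zero]
  have hconst : ∀ c, ∑ k, π k * c = c := fun c => by rw [← sum_mul, hπsum, one_mul]
  rw [hwi, abs_le]
  constructor
  · calc -M = ∑ k, π k * -M := (hconst _).symm
      _ ≤ _ := sum_le_sum fun k _ => mul_le_mul_of_nonneg_left (by linarith [hM k i]) (hπnn k)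
  · calc _ ≤ ∑ k, π k * M := sum_le_sum fun k _ => mul_le_mul_of_nonneg_left (hM i k) (hπnn k)
      _ = M := hconst M

variable [DecidableEq X]

theorem pow_mulVec_sub_pow_mulVec_le {Q : Matrix X X ℝ} (hrow : ∀ i, ∑ j, Q i j = 1) {δ : ℝ}
    (hδ : ∀ i j, δ ≤ Q i j) {w : X → ℝ} {M : ℝ} (hw : ∀ j l, w j - w l ≤ M) (m : ℕ) (i k : X) :
    (Q ^ m *ᵥ w) i - (Q ^ m *ᵥ w) k ≤ (1 - Fintype.card X * δ) ^ m * M := by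
  induction m generalizing i k with
  | zero => simpa using hw i k
  | succ m ih =>
    rw [pow_succ', ← mulVec_mulVec, pow_succ', mul_assoc]
    exact mulVec_sub_mulVec_le hrow hδ ih i k

theorem isUnit_smul_one_sub_map_ofReal {D : Matrix X X ℝ} (hoff : ∀ i j, i ≠ j → 0 ≤ D i j)
    (hrow : ∀ i, ∑ j, D i j ≤ 0) {z : ℂ} (hz : 0 ≤ z.re) (hz0 : z ≠ 0) :
    IsUnit (z • (1 : Matrix X X ℂ) - D.map Complex.ofReal) := by
  refine (isUnit_iff_isUnit_det _).2 (isUnit_iff_ne_zero.2 ?_)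
  refine det_ne_zero_of_sum_row_lt_diag fun k => ?_
  have hoffsum : ∑ j ∈ univ.erase k, ‖(z • (1 : Matrix X X ℂ) - D.map Complex.ofReal) k j‖
      = ∑ j ∈ univ.erase k, D k j := by
    refine sum_congr rfl fun j hj => ?_
    have hjk := (ne_of_mem_erase hj).symm
    simp [one_apply_ne hjk, abs_of_nonneg (hoff k j hjk)]
  have hnonneg : 0 ≤ ∑ j ∈ univ.erase k, D k j :=
    sum_nonneg fun j hj => hoff k j (ne_of_mem_erase hj).symm
  have hdiag : D k k + ∑ j ∈ univ.erase k, D k j ≤ 0 := by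
    rw [add_sum_erase _ _ (mem_univ k)]; exact hrow k
  rw [hoffsum]
  simpa using (Complex.neg_lt_norm_sub_ofReal hz hz0 (by linarith : D k k ≤ 0)).trans_le'
    (by linarith : ∑ j ∈ univ.erase k, D k j ≤ -D k k)

theorem exp_mulVec_eq_self_of_mulVec_eq_zero {𝕜 : Type*} [RCLike 𝕜] {M : Matrix X X 𝕜}
    {v : X → 𝕜} (h : M *ᵥ v = 0) : exp M *ᵥ v = v := by
  have hcol : M * of (fun i (_ : X) => v i) = 0 := by
    ext i j; simpa [mul_apply, mulVec, dotProduct] using congrFun h i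
  have hexp : exp M * of (fun i (_ : X) => v i) = of (fun i (_ : X) => v i) :=
    open scoped Matrix.Norms.Operator in exp_mul_eq_self_of_mul_eq_zero hcol
  funext i
  simpa [mul_apply, mulVec, dotProduct] using congrArg (fun N => N i i) hexp

theorem vecMul_exp_eq_self_of_vecMul_eq_zero {M : Matrix X X ℝ} {π : X → ℝ} (h : π ᵥ* M = 0) :
    π ᵥ* exp M = π := by
  rw [← mulVec_transpose, ← exp_transpose]
  exact exp_mulVec_eq_self_of_mulVec_eq_zero (by rwa [mulVec_transpose])

theorem exp_apply_nonneg {M : Matrix X X ℝ} (hM : ∀ i j, 0 ≤ M i j) (i j : X) :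
    0 ≤ exp M i j := by
  have hs : HasSum (fun n => ((n.factorial : ℝ)⁻¹) • M ^ n) (exp M) :=
    open scoped Matrix.Norms.Operator in exp_series_hasSum_exp' M
  exact (Pi.hasSum.1 (Pi.hasSum.1 hs i) j).nonneg fun n =>
    mul_nonneg (by positivity) (pow_apply_nonneg hM n i j)

theorem exp_smul_one {𝕜 : Type*} [RCLike 𝕜] (z : 𝕜) :
    exp (z • (1 : Matrix X X 𝕜)) = exp z • 1 := by
  rw [smul_one_eq_diagonal, exp_diagonal, smul_one_eq_diagonal]
  exact congrArg diagonal (funext fun _ => Pi.coe_exp _ _)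

theorem exp_apply_nonneg_of_offDiag_nonneg {M : Matrix X X ℝ}
    (hM : ∀ i j, i ≠ j → 0 ≤ M i j) (i j : X) : 0 ≤ exp M i j := by
  set c := ∑ k, |M k k|
  have hshift : ∀ i j, 0 ≤ (M + c • 1) i j := by
    intro i j
    rcases eq_or_ne i j with rfl | hij
    · have := single_le_sum (fun k _ => abs_nonneg (M k k)) (mem_univ i)
      simp only [add_apply, smul_apply, one_apply_eq, smul_eq_mul, mul_one]
      linarith [neg_abs_le (M i i)]
    · simpa [one_apply_ne hij] using hM i j hij
  have hM : M = (M + c • 1) + (-c) • 1 := by rw [neg_smul, add_neg_cancel_right]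
  rw [hM, exp_add_of_commute _ _ ((Commute.one_right _).smul_right _), exp_smul_one,
    Matrix.mul_smul, mul_one, smul_apply, smul_eq_mul]
  exact mul_nonneg (by rw [← Real.exp_eq_exp_ℝ]; positivity) (exp_apply_nonneg hshift i j)

theorem exp_mem_rowStochastic {D : Matrix X X ℝ} (hoff : ∀ i j, i ≠ j → 0 ≤ D i j)
    (hrow : ∀ i, ∑ j, D i j = 0) : exp D ∈ rowStochastic ℝ X := by
  refine mem_rowStochastic.2 ⟨exp_apply_nonneg_of_offDiag_nonneg hoff, ?_⟩
  exact exp_mulVec_eq_self_of_mulVec_eq_zero (funext fun i => by simp [mulVec, dotProduct, hrow])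

theorem exists_exp_smul_mulVec_sub_le [Nonempty X] {D : Matrix X X ℝ}
    (hoff : ∀ i j, i ≠ j → 0 ≤ D i j) (hrow : ∀ i, ∑ j, D i j = 0)
    (hirr : ∀ i j, 0 < exp D i j) (w : X → ℝ) :
    ∃ K κ : ℝ, 0 < κ ∧ ∀ t : ℝ, 0 ≤ t → ∀ i k,
      (exp (t • D) *ᵥ w) i - (exp (t • D) *ᵥ w) k ≤ K * Real.exp (-κ * t) := by
  have hstoch : ∀ s : ℝ, 0 ≤ s → exp (s • D) ∈ rowStochastic ℝ X := fun s hs =>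
    exp_mem_rowStochastic (fun i j hij => mul_nonneg hs (hoff i j hij))
      (fun i => by simp [← mul_sum, hrow])
  obtain ⟨p, hp⟩ := Finite.exists_min fun p : X × X => exp D p.1 p.2
  set δ := exp D p.1 p.2
  set κ := Fintype.card X * δ
  have hκ : 0 < κ := mul_pos (Nat.cast_pos.2 Fintype.card_pos) (hirr _ _)
  have hrowQ : ∀ i, ∑ j, exp D i j = 1 := by
    simpa using sum_row_of_mem_rowStochastic (hstoch 1 zero_le_one)
  have hκ1 : κ ≤ 1 := by
    obtain ⟨i⟩ := ‹Nonempty X›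
    calc κ = ∑ _j : X, δ := by simp [κ]
      _ ≤ ∑ j, exp D i j := sum_le_sum fun j _ => hp (i, j)
      _ = 1 := hrowQ i
  have hw : ∀ j l, w j - w l ≤ 2 * ‖w‖ := fun j l => by
    have hj := norm_le_pi_norm w j
    have hl := norm_le_pi_norm w l
    rw [Real.norm_eq_abs] at hj hl
    linarith [le_abs_self (w j), neg_abs_le (w l)]
  refine ⟨2 * ‖w‖ * Real.exp κ, κ, hκ, fun t ht i k => ?_⟩
  set s := t - ⌊t⌋₊
  have hs : 0 ≤ s := sub_nonneg.2 (Nat.floor_le ht)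
  have hsplit : exp (t • D) = exp D ^ ⌊t⌋₊ * exp (s • D) := by
    rw [← exp_nsmul, ← exp_add_of_commute _ _ (((Commute.refl D).smul_left _).smul_right _),
      ← Nat.cast_smul_eq_nsmul ℝ, ← add_smul, add_sub_cancel]
  have hv : ∀ j l, (exp (s • D) *ᵥ w) j - (exp (s • D) *ᵥ w) l ≤ 2 * ‖w‖ := fun j l => by
    simpa using mulVec_sub_mulVec_le (sum_row_of_mem_rowStochastic (hstoch s hs))
      (fun _ _ => nonneg_of_mem_rowStochastic (hstoch s hs)) hw j l
  rw [hsplit, ← mulVec_mulVec]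
  calc _ ≤ (1 - κ) ^ ⌊t⌋₊ * (2 * ‖w‖) :=
        pow_mulVec_sub_pow_mulVec_le hrowQ (fun i j => hp (i, j)) hv _ i k
    _ ≤ Real.exp κ * Real.exp (-κ * t) * (2 * ‖w‖) := by
        gcongr
        exact Real.one_sub_pow_floor_le hκ.le hκ1 t
    _ = 2 * ‖w‖ * Real.exp κ * Real.exp (-κ * t) := by ring

theorem exists_abs_exp_smul_mulVec_le {D : Matrix X X ℝ}
    (hoff : ∀ i j, i ≠ j → 0 ≤ D i j) (hrow : ∀ i, ∑ j, D i j = 0)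
    (hirr : ∀ i j, 0 < exp D i j) {π : X → ℝ} (hπnn : ∀ i, 0 ≤ π i) (hπsum : ∑ i, π i = 1)
    (hπinv : π ᵥ* D = 0) {C : X → ℝ} (hC : π ⬝ᵥ C = 0) :
    ∃ K κ : ℝ, 0 < κ ∧ ∀ t : ℝ, 0 ≤ t → ∀ i,
      |(exp (t • D) *ᵥ C) i| ≤ K * Real.exp (-κ * t) := by
  have : Nonempty X :=
    univ_nonempty_iff.1 (nonempty_of_sum_ne_zero (f := π) (by rw [hπsum]; exact one_ne_zero))
  obtain ⟨K, κ, hκ, hosc⟩ := exists_exp_smul_mulVec_sub_le hoff hrow hirr C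
  refine ⟨K, κ, hκ, fun t ht => abs_le_of_dotProduct_eq_zero hπnn hπsum ?_ (hosc t ht)⟩
  rw [dotProduct_mulVec,
    vecMul_exp_eq_self_of_vecMul_eq_zero (by rw [vecMul_smul, hπinv, smul_zero]), hC]

theorem exp_map_ofReal (M : Matrix X X ℝ) :
    exp (M.map Complex.ofReal) = (exp M).map Complex.ofReal := by
  open scoped Matrix.Norms.Operator in
    exact (map_exp Complex.ofRealHom.mapMatrix
      (continuous_id.matrix_map Complex.continuous_ofReal) M).symm

theorem exp_neg_smul_smul_one_sub_map_ofReal (D : Matrix X X ℝ) (z : ℂ) (t : ℝ) :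
    exp (-(t • (z • (1 : Matrix X X ℂ) - D.map Complex.ofReal))) =
      Complex.exp (-(z * t)) • (exp (t • D)).map Complex.ofReal := by
  have hsplit : -(t • (z • (1 : Matrix X X ℂ) - D.map Complex.ofReal)) =
      (t • D).map Complex.ofReal + (-(z * t)) • 1 := by
    ext i j
    by_cases hij : i = j <;> simp [hij, Complex.real_smul]
    ring
  rw [hsplit, exp_add_of_commute _ _ ((Commute.one_right _).smul_right _), exp_smul_one,
    Matrix.mul_smul, mul_one, exp_map_ofReal, Complex.exp_eq_exp_ℂ]

theorem hasDerivAt_dotProduct_exp_smul_mulVec {𝕜 : Type*} [RCLike 𝕜] (N : Matrix X X 𝕜)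
    (p q : X → 𝕜) (t : ℝ) :
    HasDerivAt (fun u : ℝ => p ⬝ᵥ (exp (u • N) *ᵥ q)) (p ⬝ᵥ ((N * exp (t • N)) *ᵥ q)) t := by
  let L : Matrix X X 𝕜 →ₗ[ℝ] 𝕜 :=
    { toFun := fun M => p ⬝ᵥ (M *ᵥ q)
      map_add' := fun M M' => by simp [add_mulVec, dotProduct_add]
      map_smul' := fun r M => by simp [smul_mulVec, dotProduct_smul] }
  exact open scoped Matrix.Norms.Operator in
    L.toContinuousLinearMap.hasFDerivAt.comp_hasDerivAt t (hasDerivAt_exp_smul_const' N t)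

theorem integrableOn_Ioi_and_integral_dotProduct_exp_neg_smul_mulVec {𝕜 : Type*} [RCLike 𝕜]
    {A : Matrix X X 𝕜} (hA : IsUnit A) (b c : X → 𝕜) {K κ : ℝ} (hκ : 0 < κ)
    (hdecay : ∀ t : ℝ, 0 ≤ t → ∀ i, ‖(exp (-(t • A)) *ᵥ c) i‖ ≤ K * Real.exp (-κ * t)) :
    IntegrableOn (fun t : ℝ => b ⬝ᵥ (exp (-(t • A)) *ᵥ c)) (Ioi 0) ∧
      ∫ t in Ioi (0 : ℝ), b ⬝ᵥ (exp (-(t • A)) *ᵥ c) = b ⬝ᵥ (A⁻¹ *ᵥ c) := by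
  have hderiv : ∀ p : X → 𝕜, ∀ t : ℝ, HasDerivAt (fun u : ℝ => p ⬝ᵥ (exp (-(u • A)) *ᵥ c))
      (-(p ⬝ᵥ ((A * exp (-(t • A))) *ᵥ c))) t := fun p t => by
    simpa [smul_neg, neg_mul, neg_mulVec] using hasDerivAt_dotProduct_exp_smul_mulVec (-A) p c t
  have hbound : ∀ p : X → 𝕜, ∀ t : ℝ, 0 ≤ t →
      ‖p ⬝ᵥ (exp (-(t • A)) *ᵥ c)‖ ≤ (∑ i, ‖p i‖) * K * Real.exp (-κ * t) := fun p t ht => by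
    rw [mul_assoc]
    exact norm_dotProduct_le_of_norm_le p (hdecay t ht)
  have hint : IntegrableOn (fun t : ℝ => b ⬝ᵥ (exp (-(t • A)) *ᵥ c)) (Ioi 0) := by
    refine Integrable.mono' ((exp_neg_integrableOn_Ioi 0 hκ).const_mul ((∑ i, ‖b i‖) * K))
      (continuous_iff_continuousAt.2 fun t => (hderiv b t).continuousAt).aestronglyMeasurable ?_
    exact (ae_restrict_iff' measurableSet_Ioi).2
      (Eventually.of_forall fun t ht => hbound b t (le_of_lt ht))
  have hlim : Tendsto (fun t : ℝ => -((b ᵥ* A⁻¹) ⬝ᵥ (exp (-(t • A)) *ᵥ c))) atTop (𝓝 0) := by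
    have hexp : Tendsto (fun t : ℝ => (∑ i, ‖(b ᵥ* A⁻¹) i‖) * K * Real.exp (-κ * t)) atTop
        (𝓝 0) := by
      simpa using (Real.tendsto_exp_atBot.comp (tendsto_id.const_mul_atTop_of_neg
        (neg_lt_zero.2 hκ))).const_mul ((∑ i, ‖(b ᵥ* A⁻¹) i‖) * K)
    refine squeeze_zero_norm' ?_ hexp
    filter_upwards [eventually_ge_atTop 0] with t ht
    rw [norm_neg]
    exact hbound _ t ht
  have hprim : ∀ t : ℝ, HasDerivAt (fun u : ℝ => -((b ᵥ* A⁻¹) ⬝ᵥ (exp (-(u • A)) *ᵥ c)))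
      (b ⬝ᵥ (exp (-(t • A)) *ᵥ c)) t := fun t => by
    have hinv : A⁻¹ * A = 1 := nonsing_inv_mul A ((isUnit_iff_isUnit_det A).1 hA)
    simpa [dotProduct_mulVec, vecMul_vecMul, ← mul_assoc, hinv] using
      (hderiv (b ᵥ* A⁻¹) t).fun_neg
  refine ⟨hint, ?_⟩
  rw [integral_Ioi_of_hasDerivAt_of_tendsto' (fun t _ => hprim t) hint hlim]
  simp [dotProduct_mulVec]

end Matrix

open Matrix

/-- Frequency-response formula: for an irreducible generator `D` with invariant probability
vector `π` and a centered output vector `C` (`Σ π(j)C(j) = 0`), for each `ω ≠ 0` the matrix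
`iωI − D` is invertible and `Bᵀ(iωI − D)⁻¹C = ∫₀^∞ e^{−iωt} Bᵀ exp(tD) C dt`. -/
theorem stmt_12 {X : Type*} [Fintype X] [DecidableEq X]
    (D : Matrix X X ℝ)
    (hoff : ∀ i j, i ≠ j → 0 ≤ D i j) (hrow : ∀ i, ∑ j, D i j = 0)
    (hirr : ∀ i j, 0 < NormedSpace.exp D i j)
    (π : X → ℝ) (hπnn : ∀ i, 0 ≤ π i) (hπsum : ∑ i, π i = 1)
    (hπinv : ∀ j, ∑ i, π i * D i j = 0)
    (B C : X → ℝ) (hC : ∑ j, π j * C j = 0)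
    (ω : ℝ) (hω : ω ≠ 0) :
    IsUnit ((Complex.I * ω) • (1 : Matrix X X ℂ) - D.map (Complex.ofReal)) ∧
    MeasureTheory.IntegrableOn
      (fun t : ℝ => Complex.exp (-(Complex.I * ω * t)) *
        ((∑ i, ∑ j, B i * (NormedSpace.exp (t • D)) i j * C j : ℝ) : ℂ))
      (Set.Ioi 0) ∧
    (∑ i, ∑ j, (B i : ℂ) *
        ((Complex.I * ω) • (1 : Matrix X X ℂ) - D.map (Complex.ofReal))⁻¹ i j * (C j : ℂ))
      = ∫ t in Set.Ioi (0 : ℝ), Complex.exp (-(Complex.I * ω * t)) *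
          ((∑ i, ∑ j, B i * (NormedSpace.exp (t • D)) i j * C j : ℝ) : ℂ) := by
  set A := (Complex.I * ω) • (1 : Matrix X X ℂ) - D.map Complex.ofReal
  have hA : IsUnit A :=
    isUnit_smul_one_sub_map_ofReal hoff (fun i => (hrow i).le) (by simp) (by simpa using hω)
  obtain ⟨K, κ, hκ, hdecay⟩ :=
    exists_abs_exp_smul_mulVec_le hoff hrow hirr hπnn hπsum (funext hπinv) hC
  have horbit : ∀ t : ℝ, exp (-(t • A)) *ᵥ (fun j => (C j : ℂ)) =
      Complex.exp (-(Complex.I * ω * t)) • fun i => ((exp (t • D) *ᵥ C) i : ℂ) := fun t => by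
    rw [exp_neg_smul_smul_one_sub_map_ofReal, smul_mulVec]
    congr 1
    funext i
    exact (RingHom.map_mulVec Complex.ofRealHom _ C i).symm
  have hintegrand : ∀ t : ℝ, Complex.exp (-(Complex.I * ω * t)) *
      ((∑ i, ∑ j, B i * exp (t • D) i j * C j : ℝ) : ℂ) =
        (fun i => (B i : ℂ)) ⬝ᵥ (exp (-(t • A)) *ᵥ fun j => (C j : ℂ)) := fun t => by
    rw [horbit, dotProduct_smul, sum_sum_mul_mul_eq_dotProduct_mulVec, smul_eq_mul]
    simp [dotProduct]
  obtain ⟨hint, hval⟩ := integrableOn_Ioi_and_integral_dotProduct_exp_neg_smul_mulVec hA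
    (fun i => (B i : ℂ)) (fun j => (C j : ℂ)) hκ fun t ht i => by
      simpa [horbit, Complex.norm_exp] using hdecay t ht i
  simp_rw [hintegrand, sum_sum_mul_mul_eq_dotProduct_mulVec]
  exact ⟨hA, hint, hval.symm⟩
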